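/- Let λ₁,...,λ_M ∈ ℂ all lie in the open left half-plane (Re λ_j < 0) and satisfy that each λ_{ℓ₁} + ... + λ_{ℓᵢ} (for any i ≥ 2 and any tuple ℓ ∈ {1,...,M}^i) differs from each λ_j, j = 1,...,M. Suppose additionally there are eigenvalues λ_{M+1},...,λ_N with Re λ_j < min_{k≤M} Re λ_k · i for the relevant orders. Then, for a diagonalizable pencil (A, B) whose spectrum is {λ₁,...,λ_N}, the operator L_i = R_{i,i}^T ⊗ B − I_{M^i} ⊗ A is invertible for each i ≥ 2, where R_{i,i} = Σ_{j=1}^{i} I^{⊗(j-1)} ⊗ diag(λ₁,...,λ_M) ⊗ I^{⊗(i-j)}. -/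
import Mathlib


open Kronecker Finset Matrix

/-- `R_{i,i} = Σ_{j=1}^{i} I^{⊗(j-1)} ⊗ diag(λ₁,…,λ_M) ⊗ I^{⊗(i-j)}`, represented on the
index type `Fin i → Fin M`. -/
noncomputable def kronSumDiag (M i : ℕ) (lamE : Fin M → ℂ) :
    Matrix (Fin i → Fin M) (Fin i → Fin M) ℂ :=
  fun a b => ∑ j : Fin i, (Matrix.diagonal lamE) (a j) (b j) *
    ∏ k ∈ Finset.univ.erase j, (if a k = b k then (1 : ℂ) else 0)

lemma kronSumDiag_eq_diagonal (M i : ℕ) (lamE : Fin M → ℂ) :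
    kronSumDiag M i lamE = Matrix.diagonal (fun a : Fin i → Fin M => ∑ k, lamE (a k)) := by
  ext a b
  by_cases hab : a = b
  · subst hab
    simp [kronSumDiag, Matrix.diagonal_apply]
  · rw [Matrix.diagonal_apply_ne _ hab]
    apply Finset.sum_eq_zero
    intro j _
    obtain ⟨k, hk⟩ := Function.ne_iff.mp hab
    by_cases hjk : k = j
    · subst hjk
      rw [Matrix.diagonal_apply_ne _ hk, zero_mul]
    · refine mul_eq_zero.mpr (Or.inr ?_)
      exact Finset.prod_eq_zero (Finset.mem_erase.mpr ⟨hjk, Finset.mem_univ k⟩) (if_neg hk)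

/-- For a diagonalizable pencil `(A, B)` with spectrum `λ₁,…,λ_N` whose master eigenvalues
`λ₁,…,λ_M` lie in the open left half-plane, absence of (inner and outer) resonances
`λ_{ℓ₁}+⋯+λ_{ℓᵢ} = λ_j` at each order `i ≥ 2` implies that the cohomological operator
`L_i = R_{i,i}ᵀ ⊗ B − I ⊗ A` is invertible for every `i ≥ 2`. -/
theorem cohomological_operator_invertible (N M : ℕ) (hMN : M ≤ N)
    (A B V : Matrix (Fin N) (Fin N) ℂ) (lam : Fin N → ℂ)
    (hB : IsUnit B) (hV : IsUnit V)
    (hdiag : A * V = B * V * Matrix.diagonal lam)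
    (hstable : ∀ j : Fin M, (lam (Fin.castLE hMN j)).re < 0)
    (hnonres : ∀ i : ℕ, 2 ≤ i → ∀ ℓ : Fin i → Fin M, ∀ j : Fin N,
      (∑ k : Fin i, lam (Fin.castLE hMN (ℓ k))) ≠ lam j) :
    ∀ i : ℕ, 2 ≤ i →
      IsUnit ((kronSumDiag M i (fun j => lam (Fin.castLE hMN j)))ᵀ ⊗ₖ B
        - (1 : Matrix (Fin i → Fin M) (Fin i → Fin M) ℂ) ⊗ₖ A) := by
  intro i hi
  set s : (Fin i → Fin M) → ℂ := fun a => ∑ k, lam (Fin.castLE hMN (a k)) with hs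
  have hkd : (kronSumDiag M i (fun j => lam (Fin.castLE hMN j)))ᵀ = Matrix.diagonal s := by
    rw [kronSumDiag_eq_diagonal, Matrix.diagonal_transpose]
  rw [hkd]
  -- helper: 1 ⊗ₖ X is a unit whenever X is
  have hone : ∀ X : Matrix (Fin N) (Fin N) ℂ, IsUnit X →
      IsUnit ((1 : Matrix (Fin i → Fin M) (Fin i → Fin M) ℂ) ⊗ₖ X) := by
    intro X hX
    rw [Matrix.isUnit_iff_isUnit_det, Matrix.det_kronecker, Matrix.det_one, one_pow, one_mul]
    exact ((Matrix.isUnit_iff_isUnit_det X).mp hX).pow _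
  -- key conjugation identity
  have key : (Matrix.diagonal s ⊗ₖ B - (1 : Matrix (Fin i → Fin M) (Fin i → Fin M) ℂ) ⊗ₖ A)
        * ((1 : Matrix (Fin i → Fin M) (Fin i → Fin M) ℂ) ⊗ₖ V)
      = ((1 : Matrix (Fin i → Fin M) (Fin i → Fin M) ℂ) ⊗ₖ (B * V))
        * (Matrix.diagonal s ⊗ₖ (1 : Matrix (Fin N) (Fin N) ℂ)
          - (1 : Matrix (Fin i → Fin M) (Fin i → Fin M) ℂ) ⊗ₖ Matrix.diagonal lam) := by
    rw [sub_mul, mul_sub, ← Matrix.mul_kronecker_mul, ← Matrix.mul_kronecker_mul,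
      ← Matrix.mul_kronecker_mul, ← Matrix.mul_kronecker_mul]
    simp [hdiag]
  -- the middle factor is an invertible diagonal matrix by nonresonance
  have hmid : IsUnit (Matrix.diagonal s ⊗ₖ (1 : Matrix (Fin N) (Fin N) ℂ)
      - (1 : Matrix (Fin i → Fin M) (Fin i → Fin M) ℂ) ⊗ₖ Matrix.diagonal lam) := by
    have heq : Matrix.diagonal s ⊗ₖ (1 : Matrix (Fin N) (Fin N) ℂ)
        - (1 : Matrix (Fin i → Fin M) (Fin i → Fin M) ℂ) ⊗ₖ Matrix.diagonal lam
        = Matrix.diagonal (fun p : (Fin i → Fin M) × Fin N => s p.1 - lam p.2) := by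
      rw [← Matrix.diagonal_one, ← Matrix.diagonal_one, Matrix.diagonal_kronecker_diagonal,
        Matrix.diagonal_kronecker_diagonal, ← Matrix.diagonal_sub]
      simp
    rw [heq, Matrix.isUnit_iff_isUnit_det, Matrix.det_diagonal]
    refine isUnit_iff_ne_zero.mpr (Finset.prod_ne_zero_iff.mpr ?_)
    intro p _
    exact sub_ne_zero_of_ne (hnonres i hi p.1 p.2)
  obtain ⟨u, hu⟩ := hone V hV
  have hLu : IsUnit ((Matrix.diagonal s ⊗ₖ B
      - (1 : Matrix (Fin i → Fin M) (Fin i → Fin M) ℂ) ⊗ₖ A) * (u : Matrix _ _ ℂ)) := by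
    rw [hu, key]
    exact (hone (B * V) (hB.mul hV)).mul hmid
  have hL : (Matrix.diagonal s ⊗ₖ B
      - (1 : Matrix (Fin i → Fin M) (Fin i → Fin M) ℂ) ⊗ₖ A)
      = ((Matrix.diagonal s ⊗ₖ B
        - (1 : Matrix (Fin i → Fin M) (Fin i → Fin M) ℂ) ⊗ₖ A) * (u : Matrix _ _ ℂ))
          * ((u⁻¹ : (Matrix ((Fin i → Fin M) × Fin N) ((Fin i → Fin M) × Fin N) ℂ)ˣ) : Matrix _ _ ℂ) := by
    rw [mul_assoc, Units.mul_inv, mul_one]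
  rw [hL]
  exact hLu.mul u⁻¹.isUnit
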